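/- arXiv:1703.04867 — 2 statements merged into one kernel-verified Lean document; each statement's English description precedes it below -/
import Mathlib

section
/- Let p be a prime integer and 0 ≤ k ≤ p−1. The number of p_{(k,1)}-f.period knot (p,p)-mosaics equals the number of suitably connected (p,1)-mosaics M with t-state equal to b-state and with r-state equal to the cyclic shift by k positions of its l-state, minus 7 (the subtracted 7 accounting for the (1,1)-f.period mosaics, i.e. the constant columns built from T_0 or T_5,…,T_{10}). -/
/-- Connection point on the left edge, for each of the eleven mosaic tiles `T_0, …, T_10`. -/
def cpL : Fin 11 → Bool := ![false, true, false, false, true, true, false, true, true, true, true]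
/-- Connection point on the right edge. -/
def cpR : Fin 11 → Bool := ![false, false, true, true, false, true, false, true, true, true, true]
/-- Connection point on the top edge. -/
def cpT : Fin 11 → Bool := ![false, false, false, true, true, false, true, true, true, true, true]
/-- Connection point on the bottom edge. -/
def cpB : Fin 11 → Bool := ![false, true, true, false, false, false, true, true, true, true, true]

/-- An `(m,n)`-mosaic: an `m × n` matrix of mosaic tiles (row `i`, column `j`). -/
abbrev Mosaic (m n : ℕ) := Fin m → Fin n → Fin 11

/-- Suitably connected: contiguous tiles agree about connection points on their common edge. -/
def SuitablyConnected {m n : ℕ} (M : Mosaic m n) : Prop :=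
  (∀ (i : Fin m) (j : Fin n) (h : j.val + 1 < n),
      cpR (M i j) = cpL (M i ⟨j.val + 1, h⟩)) ∧
  (∀ (i : Fin m) (h : i.val + 1 < m) (j : Fin n),
      cpB (M i j) = cpT (M ⟨i.val + 1, h⟩ j))

/-- Suitably ∂-connected: tiles on opposite ends of a row (resp. column) agree about
connection points on the outer boundary edges. -/
def SuitablyBdryConnected {m n : ℕ} (M : Mosaic m n) : Prop :=
  (∀ (i : Fin m) (j j' : Fin n), j.val = 0 → j'.val = n - 1 →
      cpL (M i j) = cpR (M i j')) ∧
  (∀ (i i' : Fin m) (j : Fin n), i.val = 0 → i'.val = m - 1 →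
      cpT (M i j) = cpB (M i' j))

/-- A period knot `(m,n)`-mosaic. -/
def PeriodKnot {m n : ℕ} (M : Mosaic m n) : Prop :=
  SuitablyConnected M ∧ SuitablyBdryConnected M

/-- `D_P^{(m,n)}`, the number of period knot `(m,n)`-mosaics. -/
noncomputable def DP (m n : ℕ) : ℕ := Nat.card {M : Mosaic m n // PeriodKnot M}

/-- No connection points on the boundary of the mosaic. -/
def BoundaryFree {m n : ℕ} (M : Mosaic m n) : Prop :=
  ∀ (i : Fin m) (j : Fin n),
    (j.val = 0 → cpL (M i j) = false) ∧ (j.val = n - 1 → cpR (M i j) = false) ∧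
    (i.val = 0 → cpT (M i j) = false) ∧ (i.val = m - 1 → cpB (M i j) = false)

/-- `D^{(m,n)}`, the number of knot `(m,n)`-mosaics. -/
noncomputable def DK (m n : ℕ) : ℕ :=
  Nat.card {M : Mosaic m n // SuitablyConnected M ∧ BoundaryFree M}

/-- Subtract `x` from the index `i`, modulo `m`. -/
def shiftIdx {m : ℕ} (x : ℤ) (i : Fin m) : Fin m :=
  ⟨(((i : ℤ) - x) % (m : ℤ)).toNat, by
    have hm : (0 : ℤ) < (m : ℤ) := by exact_mod_cast i.pos
    have h1 := Int.emod_lt_of_pos ((i : ℤ) - x) hm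
    have h2 := Int.emod_nonneg ((i : ℤ) - x) (by omega : (m : ℤ) ≠ 0)
    omega⟩

/-- The cyclic rotation `t_{x,y}`: `(t_{x,y} M)_{i,j} = M_{i-x, j-y}` (indices mod `m`, `n`). -/
def tshift {m n : ℕ} (x y : ℤ) (M : Mosaic m n) : Mosaic m n :=
  fun i j => M (shiftIdx x i) (shiftIdx y j)

/-- `M` is a `(p,q)`-f.period mosaic: `p` is the least positive integer with `M = t_{p,0}(M)`
and `q` is the least positive integer with `M = t_{0,q}(M)`. -/
def IsFPeriod {m n : ℕ} (p q : ℕ) (M : Mosaic m n) : Prop :=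
  IsLeast {a : ℕ | 0 < a ∧ M = tshift (a : ℤ) 0 M} p ∧
  IsLeast {b : ℕ | 0 < b ∧ M = tshift 0 (b : ℤ) M} q

/-- `d_{p,q}`: the number of `(p,q)`-f.period knot `(m,n)`-mosaics. -/
noncomputable def dFP (m n p q : ℕ) : ℕ :=
  Nat.card {M : Mosaic m n // PeriodKnot M ∧ IsFPeriod p q M}

/-- Equivalence of period knot mosaics under cyclic rotations of rows and columns. -/
def torRel (m n : ℕ) (A B : {M : Mosaic m n // PeriodKnot M}) : Prop :=
  ∃ x y : ℤ, tshift x y A.val = B.val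

/-- `D_T^{(m,n)}`, the number of toroidal knot `(m,n)`-mosaics. -/
noncomputable def DT (m n : ℕ) : ℕ := Nat.card (Quot (torRel m n))

/-- `M` is a `p_{(k,1)}`-f.period knot `(p,p)`-mosaic: not `(1,1)`-f.period and `M = t_{k,1}(M)`. -/
def IsPk1FPeriod {p : ℕ} (k : ℕ) (M : Mosaic p p) : Prop :=
  ¬ IsFPeriod 1 1 M ∧ M = tshift (k : ℤ) 1 M

/-- `d_{p_{(k,1)}}`: the number of `p_{(k,1)}`-f.period knot `(p,p)`-mosaics. -/
noncomputable def dPk (p k : ℕ) : ℕ :=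
  Nat.card {M : Mosaic p p // PeriodKnot M ∧ IsPk1FPeriod k M}

/-- `d_{p²}`: the number of period knot `(p,p)`-mosaics that are not `(1,1)`-, not `(1,p)`-
and not `p_{(k,1)}`-f.period for any `k`. -/
noncomputable def dPsq (p : ℕ) : ℕ :=
  Nat.card {M : Mosaic p p // PeriodKnot M ∧ ¬ IsFPeriod 1 1 M ∧ ¬ IsFPeriod 1 p M ∧
    ∀ k < p, ¬ IsPk1FPeriod k M}

/-- Entries of the pair `(X_k, O_k)` of `2^k × 2^k` matrices defined by the block recursion
`X_{k+1} = [[X_k, O_k], [O_k, X_k]]`, `O_{k+1} = [[O_k, X_k], [X_k, 4 O_k]]`,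
seeded with `X_0 = O_0 = [1]` (the most significant bit selects the block). -/
def matsXO : ℕ → ℕ → ℕ → ℕ × ℕ
  | 0, _, _ => (1, 1)
  | k + 1, i, j =>
    let v := matsXO k (i % 2 ^ k) (j % 2 ^ k)
    if i / 2 ^ k % 2 = 0 then
      if j / 2 ^ k % 2 = 0 then (v.1, v.2) else (v.2, v.1)
    else
      if j / 2 ^ k % 2 = 0 then (v.2, v.1) else (v.1, 4 * v.2)

/-- The matrix `X_k`. -/
def Xmat (m : ℕ) : Matrix (Fin (2 ^ m)) (Fin (2 ^ m)) ℕ :=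
  Matrix.of fun i j => (matsXO m i j).1

/-- The matrix `O_k`. -/
def Omat (m : ℕ) : Matrix (Fin (2 ^ m)) (Fin (2 ^ m)) ℕ :=
  Matrix.of fun i j => (matsXO m i j).2

/-- Entries of the quadruple `(X_k^+, X_k^-, O_k^+, O_k^-)` of `2^k × 2^k` matrices defined by
the block recursions `X_{k+1}^+ = [[X_k^+, O_k^-],[O_k^-, X_k^+]]`,
`X_{k+1}^- = [[X_k^-, O_k^+],[O_k^+, X_k^-]]`, `O_{k+1}^+ = [[O_k^+, X_k^-],[X_k^-, 4 O_k^+]]`,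
`O_{k+1}^- = [[O_k^-, X_k^+],[X_k^+, 4 O_k^-]]`, seeded with `X_0^+ = O_0^+ = [1]`,
`X_0^- = O_0^- = [0]` (the most significant bit selects the block). -/
def matsPM : ℕ → ℕ → ℕ → ℕ × ℕ × ℕ × ℕ
  | 0, _, _ => (1, 0, 1, 0)
  | k + 1, i, j =>
    let v := matsPM k (i % 2 ^ k) (j % 2 ^ k)
    match v with
    | (xp, xm, op, om) =>
      if i / 2 ^ k % 2 = 0 then
        if j / 2 ^ k % 2 = 0 then (xp, xm, op, om) else (om, op, xm, xp)
      else
        if j / 2 ^ k % 2 = 0 then (om, op, xm, xp) else (xp, xm, 4 * op, 4 * om)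

/-- The matrix `X_m^+`. -/
def Xplus (m : ℕ) : Matrix (Fin (2 ^ m)) (Fin (2 ^ m)) ℕ :=
  Matrix.of fun i j => (matsPM m i j).1
/-- The matrix `X_m^-`. -/
def Xminus (m : ℕ) : Matrix (Fin (2 ^ m)) (Fin (2 ^ m)) ℕ :=
  Matrix.of fun i j => (matsPM m i j).2.1
/-- The matrix `O_m^+`. -/
def Oplus (m : ℕ) : Matrix (Fin (2 ^ m)) (Fin (2 ^ m)) ℕ :=
  Matrix.of fun i j => (matsPM m i j).2.2.1
/-- The matrix `O_m^-`. -/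
def Ominus (m : ℕ) : Matrix (Fin (2 ^ m)) (Fin (2 ^ m)) ℕ :=
  Matrix.of fun i j => (matsPM m i j).2.2.2

/-- The boundary state (a word in `{o,x}^m`) encoded by `a : Fin (2^m)` in reverse
lexicographic order: the first position is the least significant bit. -/
def stateOf {m : ℕ} (a : Fin (2 ^ m)) : Fin m → Bool := fun r => (a : ℕ).testBit r.val

/-- The `l`-state of a mosaic. -/
def lState {m n : ℕ} (hn : 0 < n) (M : Mosaic m n) : Fin m → Bool :=
  fun i => cpL (M i ⟨0, hn⟩)
/-- The `r`-state of a mosaic. -/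
def rState {m n : ℕ} (hn : 0 < n) (M : Mosaic m n) : Fin m → Bool :=
  fun i => cpR (M i ⟨n - 1, Nat.sub_lt hn Nat.one_pos⟩)
/-- The `t`-state of a mosaic. -/
def tState {m n : ℕ} (hm : 0 < m) (M : Mosaic m n) : Fin n → Bool :=
  fun j => cpT (M ⟨0, hm⟩ j)
/-- The `b`-state of a mosaic. -/
def bState {m n : ℕ} (hm : 0 < m) (M : Mosaic m n) : Fin n → Bool :=
  fun j => cpB (M ⟨m - 1, Nat.sub_lt hm Nat.one_pos⟩ j)

/-- The state matrix `N^{(m,n)+}`: its `(a,b)` entry counts the suitably connected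
`(m,n)`-mosaics whose `t`-state equals its `b`-state, whose `l`-state is the `a`-th state
and whose `r`-state is the `b`-th state. -/
noncomputable def Nplus (m n : ℕ) (hm : 0 < m) (hn : 0 < n) :
    Matrix (Fin (2 ^ m)) (Fin (2 ^ m)) ℕ :=
  Matrix.of fun a b => Nat.card {M : Mosaic m n // SuitablyConnected M ∧
    tState hm M = bState hm M ∧ lState hn M = stateOf a ∧ rState hn M = stateOf b}

/-- The index map `α` for `tr^{(k)}`: cyclic shift by `k` positions of the `p`-bit binary
representation, i.e. `α(i) ≡ 2^k i (mod 2^p - 1)` for `0 < i < 2^p - 1`, `α(0) = 0`,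
`α(2^p-1) = 2^p-1`. -/
def alphaIdx (p k : ℕ) (i : Fin (2 ^ p)) : Fin (2 ^ p) :=
  if h : (i : ℕ) = 2 ^ p - 1 then i
  else ⟨(2 ^ k * (i : ℕ)) % (2 ^ p - 1), by
    have h1 : 0 < 2 ^ p := Nat.two_pow_pos p
    have h2 : (i : ℕ) < 2 ^ p := i.isLt
    have h3 : 0 < 2 ^ p - 1 := by omega
    have h4 := Nat.mod_lt (2 ^ k * (i : ℕ)) h3
    omega⟩

/-- The twisted trace `tr^{(k)}(A) = Σ_i A_{i+1, α(i)+1}`. -/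
def trk (p k : ℕ) (A : Matrix (Fin (2 ^ p)) (Fin (2 ^ p)) ℕ) : ℕ :=
  ∑ i, A i (alphaIdx p k i)

/-! ### Auxiliary lemmas -/

section Aux

lemma fin_eq_of_intCast {m : ℕ} {a b : Fin m} (h : (a : ℤ) = (b : ℤ)) : a = b :=
  Fin.ext (by exact_mod_cast h)

lemma shiftIdx_val {m : ℕ} (x : ℤ) (i : Fin m) :
    ((shiftIdx x i : Fin m) : ℤ) = ((i : ℤ) - x) % (m : ℤ) := by
  have hm : (m : ℤ) ≠ 0 := by
    have := i.pos; exact_mod_cast (by omega : (m : ℕ) ≠ 0)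
  simp only [shiftIdx]
  exact Int.toNat_of_nonneg (Int.emod_nonneg _ hm)

lemma modEq_helper {n a b t : ℤ} (h : a - b = n * t) : a ≡ b [ZMOD n] := by
  have h' : a = b + n * t := by linarith
  show a % n = b % n
  rw [h', Int.add_mul_emod_self_left]

lemma shiftIdx_eq_of {m : ℕ} {x x' : ℤ} {i i' : Fin m}
    (h : ((i : ℤ) - x) ≡ ((i' : ℤ) - x') [ZMOD (m : ℤ)]) :
    shiftIdx x i = shiftIdx x' i' :=
  fin_eq_of_intCast (by rw [shiftIdx_val, shiftIdx_val]; exact h)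

lemma shiftIdx_shiftIdx {m : ℕ} (x y : ℤ) (i : Fin m) :
    shiftIdx x (shiftIdx y i) = shiftIdx (x + y) i := by
  apply fin_eq_of_intCast
  rw [shiftIdx_val, shiftIdx_val, shiftIdx_val]
  conv_rhs => rw [show (i : ℤ) - (x + y) = ((i : ℤ) - y) - x by ring]
  rw [Int.sub_emod ((i : ℤ) - y) x, Int.sub_emod (((i : ℤ) - y) % (m : ℤ)) x,
    Int.emod_emod_of_dvd _ dvd_rfl]

lemma shiftIdx_zero {m : ℕ} (i : Fin m) : shiftIdx 0 i = i := by
  apply fin_eq_of_intCast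
  rw [shiftIdx_val, sub_zero]
  exact Int.emod_eq_of_lt (by positivity) (by exact_mod_cast i.isLt)

lemma shiftIdx_self {m : ℕ} (j : Fin m) (h0 : 0 < m) : shiftIdx (j : ℤ) j = ⟨0, h0⟩ := by
  apply fin_eq_of_intCast
  rw [shiftIdx_val]
  simp

lemma shiftIdx_neg_nat {m : ℕ} (k : ℕ) (i : Fin m) (h : (i.val + k) % m < m) :
    shiftIdx (-(k : ℤ)) i = ⟨(i.val + k) % m, h⟩ := by
  apply fin_eq_of_intCast
  rw [shiftIdx_val, sub_neg_eq_add]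
  push_cast
  rfl

lemma shiftIdx_succ {m : ℕ} (x : ℤ) (i : Fin m) (h : i.val + 1 < m) :
    shiftIdx x ⟨i.val + 1, h⟩ = shiftIdx (x - 1) i := by
  apply shiftIdx_eq_of
  have : ((⟨i.val + 1, h⟩ : Fin m) : ℤ) = (i : ℤ) + 1 := by push_cast; rfl
  rw [this]
  apply modEq_helper (t := 0)
  ring

lemma tshift_tshift {m n : ℕ} (x y x' y' : ℤ) (M : Mosaic m n) :
    tshift x y (tshift x' y' M) = tshift (x' + x) (y' + y) M := by
  funext i j
  simp [tshift, shiftIdx_shiftIdx]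

lemma tshift_iter {m n : ℕ} {x y : ℤ} {M : Mosaic m n} (h : M = tshift x y M) (t : ℕ) :
    M = tshift (t * x) (t * y) M := by
  induction t with
  | zero =>
    funext i j
    simp [tshift, shiftIdx_zero]
  | succ t ih =>
    have h2 : M = tshift x y (tshift ((t : ℤ) * x) ((t : ℤ) * y) M) := by
      rw [← ih]; exact h
    rw [tshift_tshift] at h2
    convert h2 using 2 <;> push_cast <;> ring

lemma eq_shift {m n : ℕ} {x y : ℤ} {M : Mosaic m n} (h : M = tshift x y M)
    (i : Fin m) (j : Fin n) : M i j = M (shiftIdx x i) (shiftIdx y j) := by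
  conv_lhs => rw [h]
  rfl

lemma isf11_iff {m n : ℕ} (M : Mosaic m n) :
    IsFPeriod 1 1 M ↔ (M = tshift 1 0 M ∧ M = tshift 0 1 M) := by
  constructor
  · intro h
    exact ⟨h.1.1.2, h.2.1.2⟩
  · intro h
    exact ⟨⟨⟨one_pos, h.1⟩, fun a ha => ha.1⟩, ⟨⟨one_pos, h.2⟩, fun a ha => ha.1⟩⟩

lemma const_of_f11 {m n : ℕ} {M : Mosaic m n} (hm : 0 < m) (hn : 0 < n)
    (h1 : M = tshift 1 0 M) (h2 : M = tshift 0 1 M) (i : Fin m) (j : Fin n) :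
    M i j = M ⟨0, hm⟩ ⟨0, hn⟩ := by
  have g1 : M = tshift ((i.val : ℤ)) 0 M := by
    have := tshift_iter h1 i.val
    simpa using this
  have g2 : M ⟨0, hm⟩ j = M ⟨0, hm⟩ ⟨0, hn⟩ := by
    have := tshift_iter h2 j.val
    have e := eq_shift (by simpa using this) ⟨0, hm⟩ j
    rw [shiftIdx_self j hn, shiftIdx_zero] at e
    exact e
  have e := eq_shift g1 i j
  rw [shiftIdx_self i hm, shiftIdx_zero] at e
  rw [e, g2]

lemma card_split {α : Type*} [Finite α] (P Q : α → Prop) :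
    Nat.card {x // P x ∧ ¬ Q x} + Nat.card {x // P x ∧ Q x} = Nat.card {x // P x} := by
  classical
  rw [← Nat.card_sum]
  apply Nat.card_congr
  exact (Equiv.sumCongr (Equiv.subtypeSubtypeEquivSubtypeInter P (fun x => ¬ Q x)).symm
    (Equiv.subtypeSubtypeEquivSubtypeInter P Q).symm).trans
    ((Equiv.sumComm _ _).trans (Equiv.sumCompl _))

end Aux


lemma card_eq_aux (p k : ℕ) (hp : 0 < p) :
    Nat.card {M : Mosaic p p // PeriodKnot M ∧ M = tshift (k : ℤ) 1 M} =
    Nat.card {M : Mosaic p 1 // SuitablyConnected M ∧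
      tState hp M = bState hp M ∧
      ∀ i : Fin p, lState Nat.one_pos M i =
        rState Nat.one_pos M ⟨(i.val + k) % p, Nat.mod_lt _ hp⟩} := by
  have hp1 : 1 ≤ p := hp
  apply Nat.card_congr
  refine
    { toFun := fun M => ⟨fun i _ => M.val i ⟨0, hp⟩, ?_, ?_, ?_⟩
      invFun := fun C => ⟨fun i j => C.val (shiftIdx ((j.val : ℤ) * k) i) ⟨0, Nat.one_pos⟩,
        ?_, ?_⟩
      left_inv := ?_
      right_inv := ?_ }
  -- forward: suitably connected
  · obtain ⟨M, hpk, hsh⟩ := M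
    constructor
    · intro i j h
      exact absurd h (by have := j.isLt; omega)
    · intro i h j
      exact hpk.1.2 i h ⟨0, hp⟩
  -- forward: t-state = b-state
  · obtain ⟨M, hpk, hsh⟩ := M
    funext j
    simp only [tState, bState]
    exact hpk.2.2 _ _ _ rfl rfl
  -- forward: l/r condition
  · obtain ⟨M, hpk, hsh⟩ := M
    intro i
    simp only [lState, rState]
    have h1 := hpk.2.1 i ⟨0, hp⟩ ⟨p - 1, Nat.sub_lt hp one_pos⟩ rfl rfl
    have e := eq_shift (tshift_iter hsh (p - 1)) i ⟨p - 1, Nat.sub_lt hp one_pos⟩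
    rw [mul_one] at e
    have e2 : shiftIdx (((p - 1 : ℕ) : ℤ)) (⟨p - 1, Nat.sub_lt hp one_pos⟩ : Fin p)
        = ⟨0, hp⟩ := shiftIdx_self _ hp
    have e3 : shiftIdx (((p - 1 : ℕ) : ℤ) * k) i = ⟨(i.val + k) % p, Nat.mod_lt _ hp⟩ := by
      rw [← shiftIdx_neg_nat k i (Nat.mod_lt _ hp)]
      apply shiftIdx_eq_of
      apply modEq_helper (t := -(k : ℤ))
      push_cast [Nat.cast_sub hp1]
      ring
    rw [e2, e3] at e
    rw [h1, e]
  -- backward: Period knot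
  · obtain ⟨C, hsc, hTB, hLR⟩ := C
    have hlr' : ∀ i : Fin p, cpL (C i ⟨0, Nat.one_pos⟩)
        = cpR (C (shiftIdx (-(k : ℤ)) i) ⟨0, Nat.one_pos⟩) := by
      intro i
      have h := hLR i
      simp only [lState, rState] at h
      rw [shiftIdx_neg_nat k i (Nat.mod_lt _ hp)]
      exact h
    have hcol : ∀ a : Fin p, cpB (C a ⟨0, Nat.one_pos⟩)
        = cpT (C (shiftIdx (-1 : ℤ) a) ⟨0, Nat.one_pos⟩) := by
      intro a
      by_cases h : a.val + 1 < p
      · have e : shiftIdx (-1 : ℤ) a = ⟨a.val + 1, h⟩ := by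
          apply fin_eq_of_intCast
          rw [shiftIdx_val]
          have hv : ((⟨a.val + 1, h⟩ : Fin p) : ℤ) = (a : ℤ) + 1 := by push_cast; rfl
          rw [hv, sub_neg_eq_add]
          exact Int.emod_eq_of_lt (by positivity) (by exact_mod_cast h)
        rw [e]
        exact hsc.2 a h ⟨0, Nat.one_pos⟩
      · have ha : a.val = p - 1 := by have := a.isLt; omega
        have e : shiftIdx (-1 : ℤ) a = ⟨0, hp⟩ := by
          apply fin_eq_of_intCast
          rw [shiftIdx_val]
          have h1 : (a : ℤ) - (-1) = (p : ℤ) := by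
            have := a.isLt
            have : (a : ℤ) = ((a.val : ℕ) : ℤ) := rfl
            omega
          rw [h1, Int.emod_self]
          simp
        rw [e]
        have hTB' := congrFun hTB ⟨0, Nat.one_pos⟩
        simp only [tState, bState] at hTB'
        have ea : a = ⟨p - 1, Nat.sub_lt hp one_pos⟩ := Fin.ext ha
        rw [ea]
        exact hTB'.symm
    refine ⟨⟨?_, ?_⟩, ?_, ?_⟩
    -- rows adjacency
    · intro i j h
      beta_reduce
      have hthis := (hlr' (shiftIdx (((j.val + 1 : ℕ) : ℤ) * k) i)).symm
      rw [shiftIdx_shiftIdx] at hthis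
      have e : shiftIdx (-(k : ℤ) + ((j.val + 1 : ℕ) : ℤ) * k) i
          = shiftIdx ((j.val : ℤ) * k) i := by
        apply shiftIdx_eq_of
        apply modEq_helper (t := 0)
        push_cast
        ring
      rw [e] at hthis
      exact hthis
    -- columns adjacency
    · intro i h j
      beta_reduce
      have hthis := hcol (shiftIdx ((j.val : ℤ) * k) i)
      rw [shiftIdx_shiftIdx] at hthis
      have e : shiftIdx ((j.val : ℤ) * k) (⟨i.val + 1, h⟩ : Fin p)
          = shiftIdx (-1 + (j.val : ℤ) * k) i := by
        rw [shiftIdx_succ _ _ h, show (j.val : ℤ) * k - 1 = -1 + (j.val : ℤ) * k by ring]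
      rw [e]
      exact hthis
    -- boundary rows
    · intro i j j' hj hj'
      beta_reduce
      have e0 : shiftIdx ((j.val : ℤ) * k) i = i := by
        rw [hj]
        norm_num [shiftIdx_zero]
      have e1 : shiftIdx ((j'.val : ℤ) * k) i = shiftIdx (-(k : ℤ)) i := by
        apply shiftIdx_eq_of
        apply modEq_helper (t := -(k : ℤ))
        rw [hj']
        push_cast [Nat.cast_sub hp1]
        ring
      rw [e0, e1]
      exact hlr' i
    -- boundary columns
    · intro i i' j hi hi'
      beta_reduce
      have hthis := (hcol (shiftIdx ((j.val : ℤ) * k) i')).symm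
      rw [shiftIdx_shiftIdx] at hthis
      have e : shiftIdx (-1 + (j.val : ℤ) * k) i' = shiftIdx ((j.val : ℤ) * k) i := by
        apply shiftIdx_eq_of
        apply modEq_helper (t := 1)
        have c1 : ((i' : ℤ)) = ((i'.val : ℕ) : ℤ) := rfl
        have c2 : ((i : ℤ)) = ((i.val : ℕ) : ℤ) := rfl
        rw [c1, c2, hi, hi']
        push_cast [Nat.cast_sub hp1]
        ring
      rw [e] at hthis
      exact hthis
  -- shift invariance
  · obtain ⟨C, hC⟩ := C
    funext i j
    show C (shiftIdx ((j.val : ℤ) * k) i) _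
        = C (shiftIdx (((shiftIdx 1 j).val : ℤ) * k) (shiftIdx (k : ℤ) i)) _
    rw [shiftIdx_shiftIdx]
    congr 1
    apply shiftIdx_eq_of
    apply Int.ModEq.sub (Int.ModEq.refl _)
    have hs : (((shiftIdx (1 : ℤ) j : Fin p)) : ℤ) ≡ (j : ℤ) - 1 [ZMOD (p : ℤ)] := by
      rw [shiftIdx_val]
      exact Int.emod_emod_of_dvd _ dvd_rfl
    calc (j.val : ℤ) * k = ((j : ℤ) - 1) * k + k := by
          have : ((j : ℤ)) = ((j.val : ℕ) : ℤ) := rfl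
          rw [this]; ring
      _ ≡ (((shiftIdx (1 : ℤ) j : Fin p)) : ℤ) * k + k [ZMOD (p : ℤ)] :=
          Int.ModEq.add_right _ (Int.ModEq.mul_right _ hs.symm)
  -- left inverse
  · intro M
    apply Subtype.ext
    funext i j
    obtain ⟨M, hpk, hsh⟩ := M
    show M (shiftIdx ((j.val : ℤ) * k) i) ⟨0, hp⟩ = M i j
    have e := eq_shift (tshift_iter hsh j.val) i j
    rw [mul_one] at e
    have e2 : shiftIdx ((j.val : ℕ) : ℤ) j = ⟨0, hp⟩ := shiftIdx_self j hp
    rw [e2] at e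
    exact e.symm
  -- right inverse
  · intro C
    apply Subtype.ext
    funext i j
    show C.val (shiftIdx ((((⟨0, hp⟩ : Fin p).val : ℕ) : ℤ) * k) i) ⟨0, Nat.one_pos⟩
        = C.val i j
    have e : shiftIdx ((((0 : ℕ)) : ℤ) * k) i = i := by
      norm_num [shiftIdx_zero]
    rw [Subsingleton.elim j ⟨0, Nat.one_pos⟩]
    exact congrArg (fun z => C.val z ⟨0, Nat.one_pos⟩) e


lemma const_card_aux (p k : ℕ) (hp : 0 < p) :
    Nat.card {M : Mosaic p p // (PeriodKnot M ∧ M = tshift (k : ℤ) 1 M) ∧ IsFPeriod 1 1 M}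
      = 7 := by
  have e : {M : Mosaic p p // (PeriodKnot M ∧ M = tshift (k : ℤ) 1 M) ∧ IsFPeriod 1 1 M}
      ≃ {t : Fin 11 // cpL t = cpR t ∧ cpT t = cpB t} := by
    refine
      { toFun := fun M => ⟨M.val ⟨0, hp⟩ ⟨0, hp⟩, ?_, ?_⟩
        invFun := fun t => ⟨fun _ _ => t.val, ⟨?_, ?_⟩, ?_⟩
        left_inv := ?_
        right_inv := ?_ }
    · obtain ⟨M, ⟨hpk, hsh⟩, h11⟩ := M
      obtain ⟨h1, h2⟩ := (isf11_iff M).1 h11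
      have hc := const_of_f11 hp hp h1 h2
      have h := hpk.2.1 ⟨0, hp⟩ ⟨0, hp⟩ ⟨p - 1, Nat.sub_lt hp one_pos⟩ rfl rfl
      rw [hc ⟨0, hp⟩ ⟨p - 1, Nat.sub_lt hp one_pos⟩] at h
      exact h
    · obtain ⟨M, ⟨hpk, hsh⟩, h11⟩ := M
      obtain ⟨h1, h2⟩ := (isf11_iff M).1 h11
      have hc := const_of_f11 hp hp h1 h2
      have h := hpk.2.2 ⟨0, hp⟩ ⟨p - 1, Nat.sub_lt hp one_pos⟩ ⟨0, hp⟩ rfl rfl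
      rw [hc ⟨p - 1, Nat.sub_lt hp one_pos⟩ ⟨0, hp⟩] at h
      exact h
    · exact ⟨⟨fun i j h => t.2.1.symm, fun i h j => t.2.2.symm⟩,
        fun i j j' _ _ => t.2.1, fun i i' j _ _ => t.2.2⟩
    · rfl
    · rw [isf11_iff]
      exact ⟨rfl, rfl⟩
    · intro M
      apply Subtype.ext
      funext i j
      obtain ⟨M, ⟨hpk, hsh⟩, h11⟩ := M
      obtain ⟨h1, h2⟩ := (isf11_iff M).1 h11
      exact (const_of_f11 hp hp h1 h2 i j).symm
    · intro t
      apply Subtype.ext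
      rfl
  rw [Nat.card_congr e, Nat.card_eq_fintype_card]
  decide

/-- For a prime `p` and `0 ≤ k ≤ p-1`, the number of `p_{(k,1)}`-f.period knot
`(p,p)`-mosaics equals the number of suitably connected `(p,1)`-mosaics whose `t`-state equals
its `b`-state and whose `r`-state is the cyclic shift by `k` positions of its `l`-state,
minus 7. -/

theorem pk1_count_via_columns (p : ℕ) (hP : p.Prime) (k : ℕ) (hk : k ≤ p - 1) :
    dPk p k + 7 = Nat.card {M : Mosaic p 1 // SuitablyConnected M ∧
      tState hP.pos M = bState hP.pos M ∧
      ∀ i : Fin p, lState Nat.one_pos M i =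
        rState Nat.one_pos M ⟨(i.val + k) % p, Nat.mod_lt _ hP.pos⟩} := by
  rw [← card_eq_aux p k hP.pos, ← const_card_aux p k hP.pos, dPk,
    ← card_split (fun M : Mosaic p p => PeriodKnot M ∧ M = tshift (k : ℤ) 1 M)
      (IsFPeriod 1 1)]
  congr 1
  apply Nat.card_congr
  exact Equiv.subtypeEquivRight (fun M => by unfold IsPk1FPeriod; tauto)
end

section
/- For every positive integer n, the number of period knot (n,n)-mosaics satisfies D_P^{(n,n)} ≥ 4^{n²}; equivalently, (D_P^{(n,n)})^{1/n²} ≥ 4. -/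
lemma cp_all (v : Fin 4) :
    cpL (⟨7 + v.val, by omega⟩ : Fin 11) = true ∧
    cpR (⟨7 + v.val, by omega⟩ : Fin 11) = true ∧
    cpT (⟨7 + v.val, by omega⟩ : Fin 11) = true ∧
    cpB (⟨7 + v.val, by omega⟩ : Fin 11) = true := by
  fin_cases v <;> decide

lemma card_le_DP (n : ℕ) : 4 ^ (n ^ 2) ≤ DP n n := by
  classical
  set F : (Fin n → Fin n → Fin 4) → {M : Mosaic n n // PeriodKnot M} := fun f =>
    ⟨fun i j => (⟨7 + (f i j).val, by omega⟩ : Fin 11), by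
      constructor
      · constructor
        · intro i j h
          rw [(cp_all (f i j)).2.1, (cp_all (f i ⟨j.val+1, h⟩)).1]
        · intro i h j
          rw [(cp_all (f i j)).2.2.2, (cp_all (f ⟨i.val+1, h⟩ j)).2.2.1]
      · constructor
        · intro i j j' _ _
          rw [(cp_all (f i j)).1, (cp_all (f i j')).2.1]
        · intro i i' j _ _
          rw [(cp_all (f i j)).2.2.1, (cp_all (f i' j)).2.2.2]⟩ with hF
  have hinj : Function.Injective F := by
    intro f g h
    funext i j
    have := congrArg (fun M => (M.val i j : ℕ)) h
    simp only [hF] at this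
    exact Fin.ext (by omega)
  have := Nat.card_le_card_of_injective F hinj
  have hcard : Nat.card (Fin n → Fin n → Fin 4) = 4 ^ (n ^ 2) := by
    simp [Nat.card_eq_fintype_card, ← pow_mul, sq]
  rw [hcard] at this
  exact this

/-- For every positive integer `n`, `D_P^{(n,n)} ≥ 4^{n²}`;
equivalently `(D_P^{(n,n)})^{1/n²} ≥ 4`. -/
theorem period_knot_mosaic_growth_lower_bound (n : ℕ) (hn : 0 < n) :
    4 ^ (n ^ 2) ≤ DP n n ∧ (4 : ℝ) ≤ (DP n n : ℝ) ^ (((n : ℝ) ^ 2)⁻¹) := by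
  constructor
  · exact card_le_DP n
  · have h1 : ((4:ℝ) ^ (n ^ 2 : ℕ)) ≤ (DP n n : ℝ) := by
      exact_mod_cast card_le_DP n
    have hpos : (0:ℝ) < (n:ℝ) ^ 2 := by positivity
    have h2 : ((4:ℝ) ^ (n ^ 2 : ℕ)) ^ (((n : ℝ) ^ 2)⁻¹)
        ≤ (DP n n : ℝ) ^ (((n : ℝ) ^ 2)⁻¹) := by
      apply Real.rpow_le_rpow (by positivity) h1 (by positivity)
    have h3 : ((4:ℝ) ^ (n ^ 2 : ℕ)) ^ (((n : ℝ) ^ 2)⁻¹) = 4 := by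
      rw [← Real.rpow_natCast (4:ℝ) (n ^ 2), ← Real.rpow_mul (by norm_num)]
      have : ((n ^ 2 : ℕ) : ℝ) * (((n : ℝ) ^ 2)⁻¹) = 1 := by
        push_cast
        field_simp
      rw [this, Real.rpow_one]
    linarith
end
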